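/- For every n ≥ 2 and any two disjoint edges e₁, e₂ of Q_n, the hypercube Q_n can be decomposed into two (n−1)-dimensional subcubes (by fixing some coordinate j to 0 and 1 respectively) such that e₁ lies entirely in one subcube and e₂ lies entirely in the other. -/

import Mathlib

/-!
An edge `ab` of `Q_n` flips one coordinate `i₁`, an edge `cd` flips `i₂`, and both edges lie in
the subcube `z j = a j` resp. `z j = c j` for every other `j`. So if no coordinate separates
them, `a` and `c` agree off `{i₁, i₂}`. Choosing the endpoint `x` of `ab` with `x i₁ = c i₁`,
`x` agrees with `c` off `i₂`, and the only such vertices are `c` and `d`: the edges meet.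
-/

open SimpleGraph Finset

/-- The n-dimensional hypercube: vertices are 0/1 vectors, adjacent iff
Hamming distance is 1. -/
def cube (n : ℕ) : SimpleGraph (Fin n → ZMod 2) where
  Adj x y := hammingDist x y = 1
  symm := ⟨by intro x y h; try dsimp only at h ⊢
              rwa [hammingDist_comm]⟩
  loopless := ⟨by intro x h; simp [hammingDist_self] at h⟩

/-- Parity of a vertex: sum of coordinates mod 2. -/
def parity {n : ℕ} (u : Fin n → ZMod 2) : ZMod 2 := ∑ i, u i

theorem exists_ne_and_forall_eq_of_hammingDist_eq_one {ι : Type*} [Fintype ι] {β : ι → Type*}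
    [∀ i, DecidableEq (β i)] {x y : ∀ i, β i} (h : hammingDist x y = 1) :
    ∃ i, x i ≠ y i ∧ ∀ j ≠ i, x j = y j := by
  obtain ⟨i, hi⟩ := Finset.card_eq_one.mp h
  obtain ⟨hmem, huniq⟩ := Finset.eq_singleton_iff_unique_mem.mp hi
  refine ⟨i, (Finset.mem_filter.mp hmem).2, fun j hj => ?_⟩
  by_contra hne
  exact hj (huniq j (Finset.mem_filter.mpr ⟨Finset.mem_univ j, hne⟩))

theorem ZMod.two_eq_add_one_of_ne : ∀ {x y : ZMod 2}, x ≠ y → y = x + 1 := by decide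

theorem ZMod.two_eq_or_eq_of_ne : ∀ {x y z : ZMod 2}, x ≠ y → z = x ∨ z = y := by decide

theorem eq_or_eq_of_forall_ne_eq {ι : Type*} {x y z : ι → ZMod 2} {i : ι}
    (hi : x i ≠ y i) (hxy : ∀ j ≠ i, x j = y j) (hzx : ∀ j ≠ i, z j = x j) :
    z = x ∨ z = y := by
  rcases ZMod.two_eq_or_eq_of_ne (z := z i) hi with h | h
  · left
    funext j
    by_cases hj : j = i
    · subst hj; exact h
    · exact hzx j hj
  · right
    funext j
    by_cases hj : j = i
    · subst hj; exact h
    · rw [hzx j hj, hxy j hj]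

theorem stmt3_general (n : ℕ)
    (e₁ e₂ : Sym2 (Fin n → ZMod 2))
    (he₁ : e₁ ∈ (cube n).edgeSet) (he₂ : e₂ ∈ (cube n).edgeSet)
    (hdisj : ∀ z, z ∈ e₁ → z ∉ e₂) :
    ∃ (j : Fin n) (c : ZMod 2),
      (∀ z ∈ e₁, z j = c) ∧ (∀ z ∈ e₂, z j = c + 1) := by
  induction e₁ using Sym2.ind with | _ a b =>
  induction e₂ using Sym2.ind with | _ c d =>
  obtain ⟨i₁, hab, hab'⟩ := exists_ne_and_forall_eq_of_hammingDist_eq_one (x := a) (y := b) he₁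
  obtain ⟨i₂, hcd, hcd'⟩ := exists_ne_and_forall_eq_of_hammingDist_eq_one (x := c) (y := d) he₂
  suffices ∃ j, j ≠ i₁ ∧ j ≠ i₂ ∧ a j ≠ c j by
    obtain ⟨j, hj₁, hj₂, hac⟩ := this
    refine ⟨j, a j, ?_, ?_⟩
    · simp [hab' j hj₁]
    · have hca : c j = a j + 1 := ZMod.two_eq_add_one_of_ne hac
      simp [← hcd' j hj₂, hca]
  by_contra! hac
  obtain ⟨x, hx, hxa, hxc⟩ : ∃ x ∈ s(a, b), (∀ j ≠ i₁, x j = a j) ∧ x i₁ = c i₁ := by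
    rcases ZMod.two_eq_or_eq_of_ne (z := c i₁) hab with h | h
    · exact ⟨a, by simp, fun _ _ => rfl, h.symm⟩
    · exact ⟨b, by simp, fun j hj => (hab' j hj).symm, h.symm⟩
  have hxc' : ∀ j ≠ i₂, x j = c j := fun j hj => by
    by_cases hj₁ : j = i₁
    · exact hj₁ ▸ hxc
    · rw [hxa j hj₁, hac j hj₁ hj]
  exact hdisj x hx (by simpa using eq_or_eq_of_forall_ne_eq hcd hcd' hxc')

theorem stmt3 (n : ℕ) (hn : 2 ≤ n)
    (e₁ e₂ : Sym2 (Fin n → ZMod 2))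
    (he₁ : e₁ ∈ (cube n).edgeSet) (he₂ : e₂ ∈ (cube n).edgeSet)
    (hdisj : ∀ z, z ∈ e₁ → z ∉ e₂) :
    ∃ (j : Fin n) (c : ZMod 2),
      (∀ z ∈ e₁, z j = c) ∧ (∀ z ∈ e₂, z j = c + 1) :=
  stmt3_general n e₁ e₂ he₁ he₂ hdisj
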